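/- Let k₊(τ) = -Σ_{j≥0} (4j+1)·2τ / ((2j+1/2)² + τ²)² for τ ∈ ℝ. Then k₊ is a bounded function on ℝ, and k₊(τ) = O(1/|τ|) as |τ| → ∞. -/

import Mathlib

/-!
With `a = 2j + 1/2`, the `j`-th term is `4aτ / (a² + τ²)²`, so by AM-GM its absolute value is at
most `2 / (a² + τ²)`. Since `a ≥ 1/2`, this is dominated by the telescoping difference
`8 / (a + |τ|) - 8 / (a + |τ| + 2)`, and summing over `j` gives `|k₊(τ)| ≤ 8 / (|τ| + 1/2)`,
a bound that is both uniform and `O(1/|τ|)`.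
-/

open Real Filter Asymptotics

/-- The spectral function of the real-place commutator operator on the critical line. -/
noncomputable def kPlus (τ : ℝ) : ℝ :=
  -∑' j : ℕ, (4 * (j:ℝ) + 1) * (2 * τ) / (((2 * (j:ℝ) + 1/2)^2 + τ^2)^2)

open Topology

theorem hasSum_sub_succ_of_antitone {f : ℕ → ℝ} (hf : Antitone f) (h0 : Tendsto f atTop (𝓝 0)) :
    HasSum (fun n => f n - f (n + 1)) (f 0) := by
  rw [hasSum_iff_tendsto_nat_of_nonneg fun n => sub_nonneg.2 (hf n.le_succ)]
  simp_rw [Finset.sum_range_sub']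
  simpa using h0.const_sub (f 0)

theorem abs_four_mul_mul_div_le (a τ : ℝ) :
    |4 * a * τ / (a ^ 2 + τ ^ 2) ^ 2| ≤ 2 / (a ^ 2 + τ ^ 2) := by
  rcases (add_nonneg (sq_nonneg a) (sq_nonneg τ)).eq_or_lt with h | h
  · simp [← h]
  have hamgm : |4 * a * τ| ≤ 2 * (a ^ 2 + τ ^ 2) := by
    rw [abs_le]; constructor <;> nlinarith [sq_nonneg (a + τ), sq_nonneg (a - τ)]
  calc |4 * a * τ / (a ^ 2 + τ ^ 2) ^ 2| = |4 * a * τ| / (a ^ 2 + τ ^ 2) ^ 2 := by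
        rw [abs_div, abs_of_pos (pow_pos h 2)]
    _ ≤ 2 * (a ^ 2 + τ ^ 2) / (a ^ 2 + τ ^ 2) ^ 2 := by gcongr
    _ = 2 / (a ^ 2 + τ ^ 2) := by field_simp

theorem two_div_sq_add_sq_le (a s : ℝ) (ha : 1 / 2 ≤ a) (hs : 0 ≤ s) :
    2 / (a ^ 2 + s ^ 2) ≤ 8 / (a + s) - 8 / (a + s + 2) := by
  rw [div_sub_div _ _ (by positivity) (by positivity), div_le_div_iff₀ (by positivity) (by positivity)]
  nlinarith [sq_nonneg (a - s), sq_nonneg (s - 1/2), mul_nonneg hs (by linarith : 0 ≤ a)]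

theorem abs_kPlus_le (τ : ℝ) : |kPlus τ| ≤ 8 / (|τ| + 1 / 2) := by
  set f : ℕ → ℝ := fun n => 8 / (2 * n + 1 / 2 + |τ|)
  have hf : Antitone f := fun m n hmn => by
    dsimp only [f]; gcongr
  have h0 : Tendsto f atTop (𝓝 0) := by
    refine tendsto_const_nhds.div_atTop (tendsto_atTop_add_const_right _ _ ?_)
    exact tendsto_atTop_add_const_right _ _ (tendsto_natCast_atTop_atTop.const_mul_atTop two_pos)
  have hsum : HasSum (fun n => f n - f (n + 1)) (8 / (|τ| + 1 / 2)) := by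
    simpa [f, add_comm] using hasSum_sub_succ_of_antitone hf h0
  rw [kPlus, abs_neg, ← Real.norm_eq_abs]
  refine tsum_of_norm_bounded hsum fun j => ?_
  set a : ℝ := 2 * j + 1 / 2
  calc ‖(4 * (j:ℝ) + 1) * (2 * τ) / ((a ^ 2 + τ ^ 2) ^ 2)‖
      = |4 * a * τ / (a ^ 2 + τ ^ 2) ^ 2| := by
        rw [Real.norm_eq_abs, show (4 * (j:ℝ) + 1) * (2 * τ) = 4 * a * τ by ring]
    _ ≤ 2 / (a ^ 2 + τ ^ 2) := abs_four_mul_mul_div_le a τ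
    _ ≤ 8 / (a + |τ|) - 8 / (a + |τ| + 2) := by
      simpa using two_div_sq_add_sq_le a |τ| (le_add_of_nonneg_left (by positivity)) (abs_nonneg τ)
    _ = f j - f (j + 1) := by
      simp only [f, a]; push_cast; ring

theorem kPlus_bounded_and_decay :
    (∃ C : ℝ, ∀ τ : ℝ, |kPlus τ| ≤ C) ∧
      kPlus =O[Filter.cocompact ℝ] (fun τ : ℝ => 1 / |τ|) := by
  refine ⟨⟨16, fun τ => (abs_kPlus_le τ).trans ?_⟩, .of_bound 8 ?_⟩
  · rw [div_le_iff₀ (by positivity)]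
    linarith [abs_nonneg τ]
  · filter_upwards [(isCompact_singleton (x := (0:ℝ))).compl_mem_cocompact] with τ hτ
    have hτ : 0 < |τ| := abs_pos.2 hτ
    rw [Real.norm_eq_abs, Real.norm_eq_abs, abs_of_pos (one_div_pos.2 hτ), mul_one_div]
    exact (abs_kPlus_le τ).trans (by gcongr; linarith)
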